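/- Let δ ≥ 1 and α > 0 with 16α ≤ δ, and let X be a δ-dense finite multiset of positive integers of size n. Then there exists an integer d ≥ 1 such that the multiset X' := X(d)/d (obtained by keeping exactly the elements of X divisible by d and dividing each by d) is δ-dense and has no α-almost divisor, and moreover: (i) d ≤ 4·μ(X)·Σ(X)/n²; (ii) |X'| ≥ 0.75·n; and (iii) Σ(X') ≥ 0.75·Σ(X)/d. -/

import Mathlib

/-!
Divide `X` repeatedly by an `α`-almost divisor `e`, passing to `X(e)/e`. With
`A(X) = α·μ(X)·Σ(X)/|X|²`, density gives `16·A(X) ≤ |X|` and `16·A(X)·mx(X) ≤ Σ(X)`, so a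
step loses at most `A(X) ≤ |X|/16` elements and at most `A(X)·mx(X)` of the sum, while `Σ` and
`mx` at least halve. Hence density is inherited and `A` shrinks by the factor `128/225`, so the
total losses stay below `3·A(X)` and `3·A(X)·mx(X)`; the process stops because `Σ` decreases.
The bound on `d` comes from `|Y|² ≤ 2·μ(Y)·Σ(Y)`, applied to the final `Y = X(d)/d`.
-/

open Multiset

/-- Maximum element of a multiset of naturals (0 if empty). -/
def mxElt (X : Multiset ℕ) : ℕ := X.sup

/-- Maximum multiplicity of a multiset of naturals. -/
def maxMul (X : Multiset ℕ) : ℕ := X.toFinset.sup fun x => X.count x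

/-- The set of all subset sums of a multiset. -/
def subsetSums (X : Multiset ℕ) : Set ℕ := {s | ∃ Y ≤ X, Y.sum = s}

/-- `X` is `δ`-dense if `|X|² ≥ δ·μ(X)·mx(X)`. -/
def DenseMS (δ : ℝ) (X : Multiset ℕ) : Prop :=
  δ * maxMul X * mxElt X ≤ (Multiset.card X : ℝ) ^ 2

/-- `d > 1` is an `α`-almost divisor of `X` if the number of elements of `X` not
divisible by `d` is at most `α·μ(X)·Σ(X)/|X|²`. -/
def AlmostDivisor (α : ℝ) (X : Multiset ℕ) (d : ℕ) : Prop :=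
  1 < d ∧ ((Multiset.card (X.filter fun x => ¬ d ∣ x) : ℝ) ≤
    α * maxMul X * X.sum / (Multiset.card X : ℝ) ^ 2)

/-- A multiset is uniform if every element has the maximum multiplicity. -/
def IsUniformMS (X : Multiset ℕ) : Prop := ∀ x ∈ X, X.count x = maxMul X

/-- Number of representations `f_X(z) = μ(X) · #{(x,x') ∈ supp(X)² : x + x' = z}`. -/
def fX (X : Multiset ℕ) (z : ℕ) : ℕ :=
  maxMul X * ((X.toFinset ×ˢ X.toFinset).filter fun p => p.1 + p.2 = z).card

/-- The bucket `B_{v,X} = {z : f_X(z) ≥ v}`. -/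
def bucket (X : Multiset ℕ) (v : ℕ) : Set ℕ := {z | v ≤ fX X z}

lemma sum_map_ite_eq_countP {α : Type*} (p : α → Prop) [DecidablePred p] (s : Multiset α) :
    (s.map fun x => if p x then 1 else 0).sum = s.countP p := by
  induction s using Multiset.induction_on with
  | empty => simp
  | cons a s ih => by_cases h : p a <;> simp [h, ih, add_comm]

lemma sum_map_countP_le_comm (A B : Multiset ℕ) :
    (A.map fun x => B.countP (· ≤ x)).sum = (B.map fun y => A.countP (y ≤ ·)).sum := by
  induction B using Multiset.induction_on with
  | empty => simp
  | cons b B ih =>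
    simp [Multiset.countP_cons, Multiset.sum_map_add, ih, sum_map_ite_eq_countP (b ≤ ·),
      add_comm]

lemma count_le_maxMul (X : Multiset ℕ) (x : ℕ) : X.count x ≤ maxMul X := by
  by_cases h : x ∈ X
  · exact Finset.le_sup (f := X.count) (Multiset.mem_toFinset.mpr h)
  · simp [Multiset.count_eq_zero_of_notMem h]

lemma countP_le_le_maxMul_mul {X : Multiset ℕ} (hpos : ∀ x ∈ X, 0 < x) (t : ℕ) :
    X.countP (· ≤ t) ≤ maxMul X * t := by
  set Y := X.filter (· ≤ t)
  have hY : Y.toFinset ⊆ Finset.Icc 1 t := fun v hv => by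
    obtain ⟨hvX, hvt⟩ := Multiset.mem_filter.mp (Multiset.mem_toFinset.mp hv)
    exact Finset.mem_Icc.mpr ⟨hpos v hvX, hvt⟩
  calc X.countP (· ≤ t) = ∑ a ∈ Y.toFinset, Y.count a := by
        rw [Multiset.toFinset_sum_count_eq, Multiset.countP_eq_card_filter]
    _ ≤ ∑ _a ∈ Y.toFinset, maxMul X := Finset.sum_le_sum fun a _ =>
        (Multiset.count_le_of_le a (Multiset.filter_le _ X)).trans (count_le_maxMul X a)
    _ ≤ maxMul X * t := by
        simpa [mul_comm] using Nat.mul_le_mul_right (maxMul X) (Finset.card_le_card hY)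

/-- Of every two elements `x, y` one lies below the other, and at most `μ(X)·x` elements of `X`
lie below `x`. -/
theorem sq_card_le_two_mul_maxMul_mul_sum {X : Multiset ℕ} (hpos : ∀ x ∈ X, 0 < x) :
    Multiset.card X ^ 2 ≤ 2 * maxMul X * X.sum := by
  have hpairs : Multiset.card X ^ 2 ≤
      (X.map fun x => X.countP (· ≤ x)).sum + (X.map fun x => X.countP (x ≤ ·)).sum := by
    rw [sq, ← Multiset.sum_map_add, ← smul_eq_mul, ← Multiset.sum_replicate,
      ← Multiset.map_const']
    refine Multiset.sum_map_le_sum_map _ _ fun x _ => ?_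
    rw [Multiset.card_eq_countP_add_countP (· ≤ x)]
    simp only [Multiset.countP_eq_card_filter]
    exact Nat.add_le_add_left (Multiset.card_le_card
      (Multiset.monotone_filter_right _ fun y (hy : ¬ y ≤ x) => (not_le.mp hy).le)) _
  have hbelow : (X.map fun x => X.countP (· ≤ x)).sum ≤ maxMul X * X.sum := by
    calc _ ≤ (X.map fun x => maxMul X * x).sum :=
          Multiset.sum_map_le_sum_map _ _ fun x _ => countP_le_le_maxMul_mul hpos x
      _ = maxMul X * X.sum := by rw [Multiset.sum_map_mul_left, Multiset.map_id']
  rw [← sum_map_countP_le_comm] at hpairs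
  linarith

lemma le_mxElt {X : Multiset ℕ} {x : ℕ} (h : x ∈ X) : x ≤ mxElt X := Multiset.le_sup h

lemma card_le_sum {X : Multiset ℕ} (hpos : ∀ x ∈ X, 0 < x) : Multiset.card X ≤ X.sum := by
  simpa using Multiset.card_nsmul_le_sum (a := 1) hpos

lemma sum_le_card_mul_mxElt (X : Multiset ℕ) : X.sum ≤ Multiset.card X * mxElt X := by
  simpa using Multiset.sum_le_card_nsmul X (mxElt X) fun _ => le_mxElt

/-- `X(d)/d` in the paper's notation. -/
def dvdQuot (X : Multiset ℕ) (d : ℕ) : Multiset ℕ :=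
  (X.filter fun x => d ∣ x).map fun x => x / d

section dvdQuot

variable {X : Multiset ℕ} {d : ℕ}

lemma dvdQuot_one (X : Multiset ℕ) : dvdQuot X 1 = X := by
  simp [dvdQuot]

lemma dvdQuot_cons (a : ℕ) (X : Multiset ℕ) (d : ℕ) :
    dvdQuot (a ::ₘ X) d = if d ∣ a then (a / d) ::ₘ dvdQuot X d else dvdQuot X d := by
  by_cases h : d ∣ a <;> simp [dvdQuot, h]

lemma dvdQuot_dvdQuot (X : Multiset ℕ) (d e : ℕ) :
    dvdQuot (dvdQuot X d) e = dvdQuot X (d * e) := by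
  induction X using Multiset.induction_on with
  | empty => simp [dvdQuot]
  | cons a X ih =>
    by_cases hda : d ∣ a
    · have hiff : e ∣ a / d ↔ d * e ∣ a := Nat.dvd_div_iff_mul_dvd hda
      by_cases hea : e ∣ a / d
      · simp [dvdQuot_cons, hda, hea, hiff.mp hea, ih, Nat.div_div_eq_div_mul]
      · simp [dvdQuot_cons, hda, hea, mt hiff.mpr hea, ih]
    · have hdea : ¬ d * e ∣ a := fun h => hda (dvd_of_mul_right_dvd h)
      simp [dvdQuot_cons, hda, hdea, ih]

lemma map_mul_dvdQuot (X : Multiset ℕ) (d : ℕ) :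
    (dvdQuot X d).map (d * ·) = X.filter fun x => d ∣ x := by
  rw [dvdQuot, Multiset.map_map]
  conv_rhs => rw [← Multiset.map_id' (X.filter _)]
  exact Multiset.map_congr rfl fun x hx => Nat.mul_div_cancel' (Multiset.of_mem_filter hx)

lemma card_dvdQuot_add_card_filter_not_dvd (X : Multiset ℕ) (d : ℕ) :
    Multiset.card (dvdQuot X d) + Multiset.card (X.filter fun x => ¬ d ∣ x) =
      Multiset.card X := by
  rw [dvdQuot, Multiset.card_map, ← Multiset.card_add, Multiset.filter_add_not]

lemma mul_sum_dvdQuot_add_sum_filter_not_dvd (X : Multiset ℕ) (d : ℕ) :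
    d * (dvdQuot X d).sum + (X.filter fun x => ¬ d ∣ x).sum = X.sum := by
  rw [← Multiset.map_id' (dvdQuot X d), ← Multiset.sum_map_mul_left, map_mul_dvdQuot,
    ← Multiset.sum_add, Multiset.filter_add_not]

lemma mul_sum_dvdQuot_le (X : Multiset ℕ) (d : ℕ) : d * (dvdQuot X d).sum ≤ X.sum :=
  (mul_sum_dvdQuot_add_sum_filter_not_dvd X d).le.trans' (Nat.le_add_right _ _)

lemma mul_mxElt_dvdQuot_le (X : Multiset ℕ) (d : ℕ) : d * mxElt (dvdQuot X d) ≤ mxElt X := by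
  have h : mxElt (dvdQuot X d) ≤ mxElt X / d := Multiset.sup_le.mpr fun y hy => by
    obtain ⟨x, hx, rfl⟩ := Multiset.mem_map.mp hy
    exact Nat.div_le_div_right (le_mxElt (Multiset.mem_of_mem_filter hx))
  exact (Nat.mul_le_mul_left d h).trans (Nat.mul_div_le _ _)

lemma maxMul_dvdQuot_le (hd : 0 < d) : maxMul (dvdQuot X d) ≤ maxMul X := by
  refine Finset.sup_le fun b _ => ?_
  calc (dvdQuot X d).count b = (X.filter fun x => d ∣ x).count (d * b) := by
        rw [← map_mul_dvdQuot, Multiset.count_map_eq_count' _ _ (mul_right_injective₀ hd.ne')]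
    _ ≤ X.count (d * b) := Multiset.count_le_of_le _ (Multiset.filter_le _ X)
    _ ≤ maxMul X := count_le_maxMul X (d * b)

lemma pos_of_mem_dvdQuot (hpos : ∀ x ∈ X, 0 < x) (hd : 0 < d) : ∀ y ∈ dvdQuot X d, 0 < y := by
  simp only [dvdQuot, Multiset.mem_map, Multiset.mem_filter]
  rintro _ ⟨x, ⟨hx, hdx⟩, rfl⟩
  exact Nat.div_pos (Nat.le_of_dvd (hpos x hx) hdx) hd

lemma mul_sq_card_dvdQuot_le (hpos : ∀ x ∈ X, 0 < x) (hd : 0 < d) :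
    d * Multiset.card (dvdQuot X d) ^ 2 ≤ 2 * maxMul X * X.sum :=
  calc d * Multiset.card (dvdQuot X d) ^ 2
      ≤ d * (2 * maxMul (dvdQuot X d) * (dvdQuot X d).sum) :=
        Nat.mul_le_mul_left d (sq_card_le_two_mul_maxMul_mul_sum (pos_of_mem_dvdQuot hpos hd))
    _ = 2 * maxMul (dvdQuot X d) * (d * (dvdQuot X d).sum) := by ring
    _ ≤ 2 * maxMul X * X.sum := by
        gcongr
        exacts [maxMul_dvdQuot_le hd, mul_sum_dvdQuot_le X d]

end dvdQuot

noncomputable def almostDivisorBound (α : ℝ) (X : Multiset ℕ) : ℝ :=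
  α * maxMul X * X.sum / (Multiset.card X : ℝ) ^ 2

section almostDivisor

variable {δ α : ℝ} {X : Multiset ℕ} {e : ℕ}

lemma almostDivisorBound_nonneg (hα : 0 ≤ α) (X : Multiset ℕ) :
    0 ≤ almostDivisorBound α X := by
  unfold almostDivisorBound; positivity

lemma card_filter_not_dvd_le (he : AlmostDivisor α X e) :
    (Multiset.card (X.filter fun x => ¬ e ∣ x) : ℝ) ≤ almostDivisorBound α X :=
  he.2

lemma sixteen_mul_mul_maxMul_mul_mxElt_le (hαδ : 16 * α ≤ δ) (hdense : DenseMS δ X) :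
    16 * α * maxMul X * mxElt X ≤ (Multiset.card X : ℝ) ^ 2 :=
  le_trans (by gcongr) hdense

lemma sixteen_mul_almostDivisorBound_le (hαδ : 16 * α ≤ δ) (hα : 0 ≤ α) (hdense : DenseMS δ X) :
    16 * almostDivisorBound α X ≤ Multiset.card X := by
  rcases (Nat.cast_nonneg (Multiset.card X) : (0 : ℝ) ≤ _).eq_or_lt with hn | hn
  · simp [almostDivisorBound, ← hn]
  have hS : (X.sum : ℝ) ≤ Multiset.card X * mxElt X := by
    exact_mod_cast sum_le_card_mul_mxElt X
  rw [almostDivisorBound, mul_div_assoc', div_le_iff₀ (by positivity)]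
  calc 16 * (α * maxMul X * X.sum) ≤ 16 * α * maxMul X * (Multiset.card X * mxElt X) := by
        rw [← mul_assoc, ← mul_assoc]; gcongr
    _ = 16 * α * maxMul X * mxElt X * Multiset.card X := by ring
    _ ≤ (Multiset.card X : ℝ) ^ 2 * Multiset.card X := by
        gcongr; exact sixteen_mul_mul_maxMul_mul_mxElt_le hαδ hdense
    _ = Multiset.card X * (Multiset.card X : ℝ) ^ 2 := by ring

lemma sixteen_mul_almostDivisorBound_mul_mxElt_le (hαδ : 16 * α ≤ δ) (hdense : DenseMS δ X) :
    16 * (almostDivisorBound α X * mxElt X) ≤ X.sum := by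
  rcases (Nat.cast_nonneg (Multiset.card X) : (0 : ℝ) ≤ _).eq_or_lt with hn | hn
  · rw [almostDivisorBound, ← hn, zero_pow two_ne_zero, div_zero, zero_mul, mul_zero]
    positivity
  calc 16 * (almostDivisorBound α X * mxElt X)
      = 16 * α * maxMul X * mxElt X * X.sum / (Multiset.card X : ℝ) ^ 2 := by
        rw [almostDivisorBound]; ring
    _ ≤ (Multiset.card X : ℝ) ^ 2 * X.sum / (Multiset.card X : ℝ) ^ 2 := by
        gcongr; exact sixteen_mul_mul_maxMul_mul_mxElt_le hαδ hdense
    _ = X.sum := by field_simp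

lemma card_sub_card_dvdQuot_le (he : AlmostDivisor α X e) :
    (Multiset.card X : ℝ) - Multiset.card (dvdQuot X e) ≤ almostDivisorBound α X := by
  rw [← card_dvdQuot_add_card_filter_not_dvd X e, Nat.cast_add, add_sub_cancel_left]
  exact card_filter_not_dvd_le he

lemma sum_sub_mul_sum_dvdQuot_le (he : AlmostDivisor α X e) :
    (X.sum : ℝ) - e * (dvdQuot X e).sum ≤ almostDivisorBound α X * mxElt X := by
  have hrest : ((X.filter fun x => ¬ e ∣ x).sum : ℝ)
      ≤ Multiset.card (X.filter fun x => ¬ e ∣ x) * mxElt X := by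
    exact_mod_cast Multiset.sum_le_card_nsmul _ _ fun x hx =>
      le_mxElt (Multiset.mem_of_mem_filter hx)
  rw [← mul_sum_dvdQuot_add_sum_filter_not_dvd X e, Nat.cast_add, Nat.cast_mul]
  calc _ = ((X.filter fun x => ¬ e ∣ x).sum : ℝ) := by ring
    _ ≤ _ := hrest
    _ ≤ _ := by gcongr; exact card_filter_not_dvd_le he

end almostDivisor

section reduction

variable {δ α : ℝ} {X : Multiset ℕ} {e : ℕ}

lemma AlmostDivisor.two_le (he : AlmostDivisor α X e) : 2 ≤ e := he.1

lemma AlmostDivisor.pos (he : AlmostDivisor α X e) : 0 < e := zero_lt_two.trans_le he.two_le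

lemma fifteen_mul_card_le_card_dvdQuot (hαδ : 16 * α ≤ δ) (hα : 0 ≤ α) (hdense : DenseMS δ X)
    (he : AlmostDivisor α X e) :
    15 * (Multiset.card X : ℝ) ≤ 16 * Multiset.card (dvdQuot X e) := by
  linarith [card_sub_card_dvdQuot_le he, sixteen_mul_almostDivisorBound_le hαδ hα hdense]

lemma denseMS_dvdQuot (hαδ : 16 * α ≤ δ) (hα : 0 ≤ α) (hdense : DenseMS δ X)
    (he : AlmostDivisor α X e) : DenseMS δ (dvdQuot X e) := by
  have hδ : 0 ≤ δ := by linarith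
  have hmx : 2 * (mxElt (dvdQuot X e) : ℝ) ≤ mxElt X := by
    exact_mod_cast (Nat.mul_le_mul_right _ he.two_le).trans (mul_mxElt_dvdQuot_le X e)
  have hμ : (maxMul (dvdQuot X e) : ℝ) ≤ maxMul X := by
    exact_mod_cast maxMul_dvdQuot_le he.pos
  have hcard := fifteen_mul_card_le_card_dvdQuot hαδ hα hdense he
  unfold DenseMS at hdense ⊢
  calc δ * maxMul (dvdQuot X e) * mxElt (dvdQuot X e) ≤ δ * maxMul X * (mxElt X / 2) := by
        gcongr; linarith
    _ ≤ (Multiset.card X : ℝ) ^ 2 / 2 := by linarith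
    _ ≤ (Multiset.card (dvdQuot X e) : ℝ) ^ 2 := by
        nlinarith [Nat.cast_nonneg (α := ℝ) (Multiset.card X)]

lemma almostDivisorBound_dvdQuot_le (hαδ : 16 * α ≤ δ) (hα : 0 ≤ α) (hdense : DenseMS δ X)
    (hX : X ≠ 0) (he : AlmostDivisor α X e) :
    almostDivisorBound α (dvdQuot X e) ≤ 128 / 225 * almostDivisorBound α X := by
  have hn : 0 < (Multiset.card X : ℝ) := by exact_mod_cast Multiset.card_pos.mpr hX
  have hcard := fifteen_mul_card_le_card_dvdQuot hαδ hα hdense he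
  have hsum : 2 * ((dvdQuot X e).sum : ℝ) ≤ X.sum := by
    exact_mod_cast (Nat.mul_le_mul_right _ he.two_le).trans (mul_sum_dvdQuot_le X e)
  have hμ : (maxMul (dvdQuot X e) : ℝ) ≤ maxMul X := by
    exact_mod_cast maxMul_dvdQuot_le he.pos
  calc almostDivisorBound α (dvdQuot X e)
      ≤ α * maxMul X * (X.sum / 2) / (15 / 16 * Multiset.card X) ^ 2 := by
        unfold almostDivisorBound; gcongr <;> linarith
    _ = 128 / 225 * almostDivisorBound α X := by
        unfold almostDivisorBound; field_simp; ring

end reduction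

theorem exists_dvdQuot_denseMS_forall_not_almostDivisor {δ α : ℝ} (hαδ : 16 * α ≤ δ)
    (hα : 0 ≤ α) {X : Multiset ℕ} (hX : X ≠ 0) (hpos : ∀ x ∈ X, 0 < x) (hdense : DenseMS δ X) :
    ∃ d, 0 < d ∧ DenseMS δ (dvdQuot X d) ∧ (∀ e, ¬ AlmostDivisor α (dvdQuot X d) e) ∧
      (Multiset.card X : ℝ) - Multiset.card (dvdQuot X d) ≤ 3 * almostDivisorBound α X ∧
      (X.sum : ℝ) - d * (dvdQuot X d).sum ≤ 3 * (almostDivisorBound α X * mxElt X) := by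
  by_cases hex : ∃ e, AlmostDivisor α X e
  swap
  · have hA := almostDivisorBound_nonneg hα X
    have hAm : 0 ≤ almostDivisorBound α X * mxElt X := mul_nonneg hA (Nat.cast_nonneg _)
    refine ⟨1, one_pos, ?_⟩
    simp only [dvdQuot_one, Nat.cast_one, one_mul, sub_self]
    exact ⟨hdense, not_exists.mp hex, by linarith, by linarith⟩
  obtain ⟨e, he⟩ := hex
  set Y := dvdQuot X e with hYdef
  have hcardY := fifteen_mul_card_le_card_dvdQuot hαδ hα hdense he
  have hcardY_pos : 0 < Multiset.card Y := by
    have hn : (0 : ℝ) < Multiset.card X := by exact_mod_cast Multiset.card_pos.mpr hX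
    exact_mod_cast (by linarith : (0 : ℝ) < Multiset.card Y)
  have hY : Y ≠ 0 := Multiset.card_pos.mp hcardY_pos
  have hYpos : ∀ y ∈ Y, 0 < y := pos_of_mem_dvdQuot hpos he.pos
  have hsumY : Y.sum < X.sum := by
    have h2 : 2 * Y.sum ≤ X.sum :=
      (Nat.mul_le_mul_right _ he.two_le).trans (mul_sum_dvdQuot_le X e)
    have h1 : Multiset.card Y ≤ Y.sum := card_le_sum hYpos
    omega
  obtain ⟨d, hd, hdenseZ, hnoZ, hcardZ, hsumZ⟩ :=
    exists_dvdQuot_denseMS_forall_not_almostDivisor hαδ hα hY hYpos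
      (denseMS_dvdQuot hαδ hα hdense he)
  have hA := almostDivisorBound_nonneg hα X
  have hAY := almostDivisorBound_dvdQuot_le hαδ hα hdense hX he
  rw [hYdef, dvdQuot_dvdQuot] at hdenseZ hnoZ hcardZ hsumZ
  refine ⟨e * d, Nat.mul_pos he.pos hd, hdenseZ, hnoZ, ?_, ?_⟩
  · linarith [card_sub_card_dvdQuot_le he]
  · have hmx : (e : ℝ) * mxElt Y ≤ mxElt X := by exact_mod_cast mul_mxElt_dvdQuot_le X e
    have hAm : 0 ≤ almostDivisorBound α X * mxElt X := mul_nonneg hA (Nat.cast_nonneg _)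
    calc (X.sum : ℝ) - ((e * d : ℕ) : ℝ) * (dvdQuot X (e * d)).sum
        = (X.sum - e * Y.sum) + e * (Y.sum - d * (dvdQuot X (e * d)).sum) := by
          push_cast; ring
      _ ≤ almostDivisorBound α X * mxElt X + e * (3 * (almostDivisorBound α Y * mxElt Y)) := by
        gcongr; exact sum_sub_mul_sum_dvdQuot_le he
      _ = almostDivisorBound α X * mxElt X + 3 * almostDivisorBound α Y * (e * mxElt Y) := by ring
      _ ≤ almostDivisorBound α X * mxElt X +
            3 * (128 / 225 * almostDivisorBound α X) * mxElt X := by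
        have := almostDivisorBound_nonneg hα Y
        gcongr
      _ ≤ 3 * (almostDivisorBound α X * mxElt X) := by linarith
termination_by X.sum

theorem stmt16_general (δ α : ℝ) (hα : 0 < α) (hαδ : 16 * α ≤ δ)
    (X : Multiset ℕ) (hX : X ≠ 0) (hpos : ∀ x ∈ X, 0 < x)
    (n : ℕ) (hn : n = Multiset.card X) (hdense : DenseMS δ X) :
    ∃ d : ℕ, 1 ≤ d ∧
      DenseMS δ ((X.filter fun x => d ∣ x).map fun x => x / d) ∧
      (∀ e : ℕ, ¬ AlmostDivisor α ((X.filter fun x => d ∣ x).map fun x => x / d) e) ∧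
      (d : ℝ) ≤ 4 * maxMul X * X.sum / (n : ℝ) ^ 2 ∧
      0.75 * (n : ℝ) ≤ (Multiset.card ((X.filter fun x => d ∣ x).map fun x => x / d) : ℝ) ∧
      0.75 * (X.sum : ℝ) / d ≤ ((((X.filter fun x => d ∣ x).map fun x => x / d)).sum : ℝ) := by
  subst hn
  obtain ⟨d, hd, hdense', hno, hcard, hsum⟩ :=
    exists_dvdQuot_denseMS_forall_not_almostDivisor hαδ hα.le hX hpos hdense
  have hA := sixteen_mul_almostDivisorBound_le hαδ hα.le hdense
  have hAm := sixteen_mul_almostDivisorBound_mul_mxElt_le hαδ hdense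
  have hcard' : 13 * (Multiset.card X : ℝ) ≤ 16 * Multiset.card (dvdQuot X d) := by linarith
  have hsq : (d : ℝ) * Multiset.card (dvdQuot X d) ^ 2 ≤ 2 * maxMul X * X.sum := by
    exact_mod_cast mul_sq_card_dvdQuot_le hpos hd
  have hn : (0 : ℝ) < Multiset.card X := by exact_mod_cast Multiset.card_pos.mpr hX
  refine ⟨d, hd, hdense', hno, ?_, ?_, ?_⟩
  · rw [le_div_iff₀ (by positivity)]
    calc (d : ℝ) * (Multiset.card X : ℝ) ^ 2
        ≤ d * (16 / 13 * (Multiset.card (dvdQuot X d) : ℝ)) ^ 2 := by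
          gcongr; linarith
      _ = 256 / 169 * (d * (Multiset.card (dvdQuot X d) : ℝ) ^ 2) := by ring
      _ ≤ 4 * (maxMul X : ℝ) * X.sum := by
          have : 0 ≤ (maxMul X : ℝ) * X.sum := by positivity
          linarith
  · change _ ≤ (Multiset.card (dvdQuot X d) : ℝ)
    linarith
  · rw [div_le_iff₀ (by exact_mod_cast hd)]
    change _ ≤ ((dvdQuot X d).sum : ℝ) * d
    linarith

theorem stmt16 (δ α : ℝ) (hδ : 1 ≤ δ) (hα : 0 < α) (hαδ : 16 * α ≤ δ)
    (X : Multiset ℕ) (hX : X ≠ 0) (hpos : ∀ x ∈ X, 0 < x)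
    (n : ℕ) (hn : n = Multiset.card X) (hdense : DenseMS δ X) :
    ∃ d : ℕ, 1 ≤ d ∧
      DenseMS δ ((X.filter fun x => d ∣ x).map fun x => x / d) ∧
      (∀ e : ℕ, ¬ AlmostDivisor α ((X.filter fun x => d ∣ x).map fun x => x / d) e) ∧
      (d : ℝ) ≤ 4 * maxMul X * X.sum / (n : ℝ) ^ 2 ∧
      0.75 * (n : ℝ) ≤ (Multiset.card ((X.filter fun x => d ∣ x).map fun x => x / d) : ℝ) ∧
      0.75 * (X.sum : ℝ) / d ≤ ((((X.filter fun x => d ∣ x).map fun x => x / d)).sum : ℝ) :=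
  stmt16_general δ α hα hαδ X hX hpos n hn hdense
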